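/- Let Q ∈ ℝ^{n×n} be a real symmetric positive semidefinite matrix with rank(Q) ≤ 2. Then there exists a complex vector B ∈ ℂ^n such that Q = Re(B Bᴴ). -/

import Mathlib

open Matrix

/-- Let `Q ∈ ℝ^{n×n}` be real symmetric positive semidefinite with `rank Q ≤ 2`.
Then there exists a complex vector `B ∈ ℂ^n` such that `Q = Re (B Bᴴ)`. -/
theorem exists_complex_vector_of_psd_rank_le_two
    (n : ℕ) (Q : Matrix (Fin n) (Fin n) ℝ)
    (hSymm : Qᵀ = Q)
    (hPSD : ∀ a : Fin n → ℝ, 0 ≤ a ⬝ᵥ Q *ᵥ a)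
    (hRank : Q.rank ≤ 2) :
    ∃ B : Fin n → ℂ,
      Q = Matrix.of fun i j : Fin n => (B i * (starRingEnd ℂ) (B j)).re := by
  classical
  have hQ : Q.IsHermitian := by
    rwa [Matrix.IsHermitian, Matrix.conjTranspose_eq_transpose_of_trivial]
  have hpsd : Q.PosSemidef :=
    Matrix.posSemidef_iff_dotProduct_mulVec.mpr ⟨hQ, fun x => by simpa using hPSD x⟩
  have hev : ∀ k, 0 ≤ hQ.eigenvalues k := hpsd.eigenvalues_nonneg
  -- entry formula
  have hentry : ∀ i j, Q i j =
      ∑ k, hQ.eigenvalues k * (hQ.eigenvectorBasis k i * hQ.eigenvectorBasis k j) := by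
    intro i j
    conv_lhs => rw [hQ.spectral_theorem, Unitary.conjStarAlgAut_apply]
    rw [Matrix.mul_apply]
    refine Finset.sum_congr rfl fun k _ => ?_
    simp [Matrix.mul_diagonal, Matrix.star_apply]
    ring
  -- embedding of nonzero eigenvalue indices into Fin 2
  have hcard : Fintype.card {k // hQ.eigenvalues k ≠ 0} ≤ 2 := by
    rw [← hQ.rank_eq_card_non_zero_eigs]; exact hRank
  obtain ⟨f⟩ : Nonempty ({k // hQ.eigenvalues k ≠ 0} ↪ Fin 2) := by
    rw [Function.Embedding.nonempty_iff_card_le]; simpa using hcard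
  set v : Fin n → Fin n → ℝ := fun k => ⇑(hQ.eigenvectorBasis k) with hv
  set w : Fin 2 → Fin n → ℝ := fun m =>
    if h : ∃ k : {k // hQ.eigenvalues k ≠ 0}, f k = m then
      Real.sqrt (hQ.eigenvalues h.choose.1) • v h.choose.1 else 0 with hw
  have hwf : ∀ k : {k // hQ.eigenvalues k ≠ 0},
      w (f k) = Real.sqrt (hQ.eigenvalues k.1) • v k.1 := by
    intro k
    have h : ∃ k' : {k // hQ.eigenvalues k ≠ 0}, f k' = f k := ⟨k, rfl⟩
    have hk : h.choose = k := f.injective h.choose_spec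
    rw [hw]; simp only [dif_pos h, hk]
  have key : ∀ i j, Q i j = ∑ m : Fin 2, w m i * w m j := by
    intro i j
    rw [hentry i j]
    have h1 : ∑ m : Fin 2, w m i * w m j
        = ∑ k : {k // hQ.eigenvalues k ≠ 0}, w (f k) i * w (f k) j := by
      rw [← Finset.sum_map Finset.univ f (fun m => w m i * w m j)]
      refine (Finset.sum_subset (Finset.subset_univ _) ?_).symm
      intro m _ hm
      have : ¬ ∃ k : {k // hQ.eigenvalues k ≠ 0}, f k = m := by
        rintro ⟨k, rfl⟩
        exact hm (Finset.mem_map_of_mem f (Finset.mem_univ k))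
      have hz : w m = 0 := by rw [hw]; exact dif_neg this
      rw [hz]; simp
    rw [h1]
    have h2 : ∀ k : {k // hQ.eigenvalues k ≠ 0},
        w (f k) i * w (f k) j = hQ.eigenvalues k.1 * (v k.1 i * v k.1 j) := by
      intro k
      rw [hwf k]
      simp only [Pi.smul_apply, smul_eq_mul]
      rw [show Real.sqrt (hQ.eigenvalues k.1) * v k.1 i *
            (Real.sqrt (hQ.eigenvalues k.1) * v k.1 j)
          = (Real.sqrt (hQ.eigenvalues k.1) * Real.sqrt (hQ.eigenvalues k.1))
            * (v k.1 i * v k.1 j) by ring,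
        Real.mul_self_sqrt (hev k.1)]
    rw [Finset.sum_congr rfl fun k _ => h2 k]
    rw [← Finset.sum_subtype (Finset.univ.filter (fun k => hQ.eigenvalues k ≠ 0))
      (by simp) (fun k => hQ.eigenvalues k * (v k i * v k j))]
    refine (Finset.sum_subset (Finset.filter_subset _ _) ?_).symm
    intro k _ hk
    simp only [Finset.mem_filter, Finset.mem_univ, true_and, not_not] at hk
    simp [hk]
  refine ⟨fun i => ⟨w 0 i, w 1 i⟩, ?_⟩
  ext i j
  rw [key i j]
  simp [Complex.mul_re, Fin.sum_univ_two]
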